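/- Let 𝒜 be a unital separable C*-algebra, let π₀ : 𝒜 → L(H₀) be a faithful unital representation, and let π : 𝒜 → L(H) be a non-zero unital representation such that π(𝒜) has an amenable trace. Then π₀(𝒜) has an amenable trace. More precisely, if ψ is a hypertrace on L(H) for π(𝒜) and Φ : L(H₀) → L(H) is any unital completely positive map extending π ∘ π₀⁻¹ on π₀(𝒜), then ψ ∘ Φ is a hypertrace on L(H₀) for π₀(𝒜). -/

import Mathlib

open Filter Topology
open scoped ComplexOrder

noncomputable section

variable {H : Type*} [NormedAddCommGroup H] [InnerProductSpace ℂ H] [CompleteSpace H]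

/-- `P` is a finite-rank orthogonal projection on the Hilbert space `H`. -/
def IsFinRankProj (P : H →L[ℂ] H) : Prop :=
  IsIdempotentElem P ∧ IsSelfAdjoint P ∧ FiniteDimensional ℂ (LinearMap.range (P : H →ₗ[ℂ] H))

/-- The Hilbert–Schmidt norm of an operator, computed with respect to the Hilbert basis `b`
(for Hilbert–Schmidt operators it is independent of the choice of `b`). -/
def hsNorm {ι : Type*} (b : HilbertBasis ι ℂ H) (T : H →L[ℂ] H) : ℝ :=
  Real.sqrt (∑' i, ‖T (b i)‖ ^ 2)

/-- The canonical trace of an operator, computed with respect to the Hilbert basis `b`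
(for trace-class operators it is independent of the choice of `b`). -/
def trOp {ι : Type*} (b : HilbertBasis ι ℂ H) (T : H →L[ℂ] H) : ℂ :=
  ∑' i, (inner ℂ (b i) (T (b i)) : ℂ)

/-- `{P n}` is a Følner sequence (of non-zero finite-rank orthogonal projections)
for the set of operators `S ⊆ L(H)`. -/
def IsFolnerSeq {ι : Type*} (b : HilbertBasis ι ℂ H) (S : Set (H →L[ℂ] H))
    (P : ℕ → H →L[ℂ] H) : Prop :=
  (∀ n, IsFinRankProj (P n) ∧ P n ≠ 0) ∧
  ∀ A ∈ S, Tendsto (fun n => hsNorm b (A * P n - P n * A) / hsNorm b (P n)) atTop (𝓝 0)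

/-- A proper Følner sequence: an increasing Følner sequence converging strongly to `1`. -/
def IsProperFolnerSeq {ι : Type*} (b : HilbertBasis ι ℂ H) (S : Set (H →L[ℂ] H))
    (P : ℕ → H →L[ℂ] H) : Prop :=
  IsFolnerSeq b S P ∧ Monotone (fun n => LinearMap.range (P n : H →ₗ[ℂ] H)) ∧
    ∀ x : H, Tendsto (fun n => P n x) atTop (𝓝 x)

/-- A state on a unital complex `*`-algebra: a unital positive linear functional. -/
def IsStateOn {A : Type*} [Ring A] [Algebra ℂ A] [StarRing A] (φ : A →ₗ[ℂ] ℂ) : Prop :=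
  φ 1 = 1 ∧ ∀ a, 0 ≤ φ (star a * a)

/-- `ψ` is a hypertrace on `L(H)` for the set `S`: a state on `L(H)` centralized by `S`. -/
def IsHypertrace (ψ : (H →L[ℂ] H) →ₗ[ℂ] ℂ) (S : Set (H →L[ℂ] H)) : Prop :=
  IsStateOn ψ ∧ ∀ X : H →L[ℂ] H, ∀ A ∈ S, ψ (X * A) = ψ (A * X)

/-- The inclusion of a star subalgebra as a linear map. -/
def valLM (𝒜 : StarSubalgebra ℂ (H →L[ℂ] H)) : ↥𝒜 →ₗ[ℂ] (H →L[ℂ] H) :=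
  { toFun := Subtype.val, map_add' := fun _ _ => rfl, map_smul' := fun _ _ => rfl }

/-- `τ` is an amenable trace on the concrete C*-algebra `𝒜 ⊆ L(H)`: a state on `𝒜` which
extends to a state `ψ` on `L(H)` satisfying `ψ(XA) = ψ(AX)` for `X ∈ L(H)`, `A ∈ 𝒜`. -/
def IsAmenableTrace (𝒜 : StarSubalgebra ℂ (H →L[ℂ] H)) (τ : ↥𝒜 →ₗ[ℂ] ℂ) : Prop :=
  IsStateOn τ ∧ ∃ ψ : (H →L[ℂ] H) →ₗ[ℂ] ℂ,
    IsHypertrace ψ ↑𝒜 ∧ ∀ a : ↥𝒜, ψ (valLM 𝒜 a) = τ a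

/-- A linear map between unital complex `*`-algebras is completely positive if all its
matrix amplifications map positive elements to positive elements. -/
def IsCP {A B : Type*} [Ring A] [Algebra ℂ A] [StarRing A]
    [Ring B] [Algebra ℂ B] [StarRing B] (φ : A →ₗ[ℂ] B) : Prop :=
  ∀ (n : ℕ) (x : Matrix (Fin n) (Fin n) A),
    (∃ y : Matrix (Fin n) (Fin n) A, x = star y * y) →
      ∃ z : Matrix (Fin n) (Fin n) B, x.map φ = star z * z

/-- Unital completely positive map. -/
def IsUCP {A B : Type*} [Ring A] [Algebra ℂ A] [StarRing A]
    [Ring B] [Algebra ℂ B] [StarRing B] (φ : A →ₗ[ℂ] B) : Prop :=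
  φ 1 = 1 ∧ IsCP φ

/-- The `2`-norm `‖F‖₂ = √(tr(F*F))` on `M_k(ℂ)` associated with the normalized trace `tr`. -/
def l2trNorm {k : ℕ} (F : Matrix (Fin k) (Fin k) ℂ) : ℝ :=
  Real.sqrt ((Matrix.trace (star F * F)).re / k)

/-- The operator (C*-) norm of a complex matrix. -/
def matOpNorm {k : ℕ} (F : Matrix (Fin k) (Fin k) ℂ) : ℝ :=
  ‖Matrix.toEuclideanCLM (𝕜 := ℂ) F‖

/-- A unital separable C*-algebra is a Følner C*-algebra if it admits a sequence of u.c.p. maps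
into matrix algebras which is asymptotically multiplicative in the normalized `2`-norms. -/
def IsFolnerAlgebra (A : Type*) [NormedRing A] [StarRing A] [NormedAlgebra ℂ A] : Prop :=
  ∃ (k : ℕ → ℕ) (φ : ∀ n, A →ₗ[ℂ] Matrix (Fin (k n)) (Fin (k n)) ℂ),
    (∀ n, IsUCP (φ n)) ∧
    ∀ a b : A, Tendsto (fun n => l2trNorm ((φ n) (a * b) - (φ n) a * (φ n) b)) atTop (𝓝 0)

/-- A proper Følner C*-algebra: the u.c.p. maps can moreover be chosen
asymptotically isometric. -/
def IsProperFolnerAlgebra (A : Type*) [NormedRing A] [StarRing A] [NormedAlgebra ℂ A] : Prop :=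
  ∃ (k : ℕ → ℕ) (φ : ∀ n, A →ₗ[ℂ] Matrix (Fin (k n)) (Fin (k n)) ℂ),
    (∀ n, IsUCP (φ n)) ∧
    (∀ a b : A, Tendsto (fun n => l2trNorm ((φ n) (a * b) - (φ n) a * (φ n) b)) atTop (𝓝 0)) ∧
    ∀ a : A, Tendsto (fun n => matOpNorm ((φ n) a)) atTop (𝓝 ‖a‖)

/-!
Choi's multiplicative-domain argument. If a u.c.p. map `Φ` into a C*-algebra satisfies
`Φ (a⋆a) = Φ(a)⋆Φ(a)`, then `Φ (x a) = Φ x Φ a` for all `x`, and symmetrically on the left.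
Because `Φ` extends `π ∘ π₀⁻¹`, every `π₀ b` is of this kind, so
`ψ (Φ (X π₀ b)) = ψ (Φ X π b) = ψ (π b Φ X) = ψ (Φ (π₀ b X))`; and `ψ ∘ Φ` is a state because
`Φ` is unital and positive.
-/

open Matrix

section CompletelyPositive

variable {A B : Type*} [Ring A] [Algebra ℂ A] [StarRing A] [Ring B] [Algebra ℂ B] [StarRing B]
  {φ : A →ₗ[ℂ] B}

theorem IsCP.map_star_mul_self (hφ : IsCP φ) (a : A) : ∃ z : B, φ (star a * a) = star z * z := by
  obtain ⟨z, hz⟩ := hφ 1 (star !![a] * !![a]) ⟨!![a], rfl⟩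
  refine ⟨z 0 0, ?_⟩
  simpa [Matrix.mul_apply, Matrix.star_apply] using congrFun (congrFun hz 0) 0

theorem IsCP.map_star (hφ : IsCP φ) (a : A) : φ (star a) = star (φ a) := by
  obtain ⟨z, hz⟩ := hφ 2 (star !![1, a; 0, 0] * !![1, a; 0, 0]) ⟨_, rfl⟩
  have h10 := congrFun (congrFun hz 1) 0
  have h01 := congrFun (congrFun hz 0) 1
  simp only [map_apply, Matrix.mul_apply, Matrix.star_apply, Fin.sum_univ_two] at h10 h01
  simp only [of_apply, cons_val', cons_val_zero, cons_val_one, empty_val', cons_val_fin_one,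
    star_one, star_zero, one_mul, zero_mul, mul_one, add_zero] at h10 h01
  rw [h10, h01]
  simp [star_add, star_mul]

theorem IsStateOn.comp_ucp {ψ : B →ₗ[ℂ] ℂ} (hψ : IsStateOn ψ) (hφ : IsUCP φ) :
    IsStateOn (ψ ∘ₗ φ) := by
  refine ⟨by simp [hφ.1, hψ.1], fun a => ?_⟩
  obtain ⟨z, hz⟩ := hφ.2.map_star_mul_self a
  simpa [hz] using hψ.2 z

variable [PartialOrder B] [StarOrderedRing B]

theorem IsCP.star_dotProduct_map_mulVec_nonneg (hφ : IsCP φ) {n : ℕ}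
    (y : Matrix (Fin n) (Fin n) A) (u : Fin n → B) :
    0 ≤ star u ⬝ᵥ ((star y * y).map φ *ᵥ u) := by
  obtain ⟨z, hz⟩ := hφ n (star y * y) ⟨y, rfl⟩
  rw [hz, ← mulVec_mulVec, dotProduct_mulVec, star_eq_conjTranspose, ← star_mulVec]
  exact dotProduct_star_self_nonneg _

end CompletelyPositive

section CStarAlgebra

variable {B : Type*} [CStarAlgebra B] [PartialOrder B] [StarOrderedRing B]

theorem eq_zero_of_forall_quadratic_nonneg {G D : B}
    (h : ∀ c : B, 0 ≤ star c * G * c + (star c * D + star D * c)) : D = 0 := by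
  set K := ‖star D * G * D‖
  -- `c = -s • D` gives `2s • D⋆D ≤ s² • D⋆GD`, hence `‖D‖² ≤ s‖D⋆GD‖/2` for every `s > 0`.
  have hle : ∀ s : ℝ, 0 < s → 2 * ‖D‖ ^ 2 ≤ s * K := by
    intro s hs
    have hc := h (-((s : ℂ) • D))
    have hexpand : star (-((s : ℂ) • D)) * G * (-((s : ℂ) • D))
        + (star (-((s : ℂ) • D)) * D + star D * (-((s : ℂ) • D)))
        = ((s : ℂ) ^ 2) • (star D * G * D) - ((2 * s : ℝ) : ℂ) • (star D * D) := by
      simp only [star_neg, star_smul, Complex.star_def, Complex.conj_ofReal, neg_mul, mul_neg,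
        smul_mul_assoc, mul_smul_comm]
      push_cast
      module
    rw [hexpand, sub_nonneg] at hc
    have hnorm := CStarAlgebra.norm_le_norm_of_nonneg_of_le
      (smul_nonneg (by exact_mod_cast (by positivity : (0 : ℝ) ≤ 2 * s)) (star_mul_self_nonneg D))
      hc
    rw [norm_smul, norm_smul, CStarRing.norm_star_mul_self] at hnorm
    rw [norm_pow, Complex.norm_real, Complex.norm_real, Real.norm_of_nonneg hs.le,
      Real.norm_of_nonneg (by positivity)] at hnorm
    exact le_of_mul_le_mul_left (by nlinarith) hs
  have hsq : ‖D‖ ^ 2 ≤ 0 := by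
    refine le_of_forall_pos_le_add fun ε hε => ?_
    have hs : 0 < 2 * ε / (K + 1) := by positivity
    have hK : 2 * ε / (K + 1) * K ≤ 2 * ε := by
      rw [div_mul_eq_mul_div, div_le_iff₀ (by positivity)]
      nlinarith
    linarith [hle _ hs]
  exact norm_eq_zero.mp (pow_eq_zero_iff two_ne_zero |>.mp (le_antisymm hsq (by positivity)))

end CStarAlgebra

section MultiplicativeDomain

variable {A B : Type*} [Ring A] [Algebra ℂ A] [StarRing A]
  [CStarAlgebra B] [PartialOrder B] [StarOrderedRing B] {Φ : A →ₗ[ℂ] B}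

theorem IsUCP.map_mul_of_map_star_mul_self (hΦ : IsUCP Φ) {a : A}
    (ha : Φ (star a * a) = star (Φ a) * Φ a) (x : A) : Φ (x * a) = Φ x * Φ a := by
  have hstar := hΦ.2.map_star
  let y : Matrix (Fin 3) (Fin 3) A := !![star x, a, 1; 0, 0, 0; 0, 0, 0]
  have hyy : star y * y = !![x * star x, x * a, x; star a * star x, star a * a, star a;
      star x, a, 1] := by
    ext i j
    fin_cases i <;> fin_cases j <;> simp [y, Matrix.mul_apply, Fin.sum_univ_three]
  refine sub_eq_zero.mp <|
    eq_zero_of_forall_quadratic_nonneg (G := Φ (x * star x) - Φ x * star (Φ x)) fun c => ?_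
  -- The last entry completes the square: the quadratic form of `Φ₃ (y⋆y)` at this vector is
  -- `c⋆Gc + c⋆D + D⋆c` with `D = Φ (x a) - Φ x Φ a`.
  have hpos := hΦ.2.star_dotProduct_map_mulVec_nonneg y ![c, 1, -(Φ (star x) * c + Φ a)]
  rw [hyy] at hpos
  simp only [dotProduct, mulVec, Fin.sum_univ_three, map_apply, of_apply, cons_val',
    cons_val_zero, cons_val_one, cons_val_two, empty_val', cons_val_fin_one,
    tail_cons, vecHead, Pi.star_apply, star_one, one_mul, mul_one, hΦ.1, ha, ← star_mul,
    hstar] at hpos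
  convert hpos using 1
  simp only [star_neg, star_add, star_sub, star_mul, star_star]
  noncomm_ring

theorem IsUCP.map_mul_of_map_mul_star_self (hΦ : IsUCP Φ) {a : A}
    (ha : Φ (a * star a) = Φ a * star (Φ a)) (x : A) : Φ (a * x) = Φ a * Φ x := by
  have hstar := hΦ.2.map_star
  have h := hΦ.map_mul_of_map_star_mul_self (a := star a) (by simpa [hstar] using ha) (star x)
  rwa [← star_mul, hstar, hstar, hstar, ← star_mul, star_inj] at h

end MultiplicativeDomain

theorem IsHypertrace.comp_ucp {H₀ : Type*} [NormedAddCommGroup H₀] [InnerProductSpace ℂ H₀]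
    [CompleteSpace H₀] {ψ : (H →L[ℂ] H) →ₗ[ℂ] ℂ} {S : Set (H →L[ℂ] H)} (hψ : IsHypertrace ψ S)
    {Φ : (H₀ →L[ℂ] H₀) →ₗ[ℂ] (H →L[ℂ] H)} (hΦ : IsUCP Φ) {S₀ : Set (H₀ →L[ℂ] H₀)}
    (hmaps : ∀ a ∈ S₀, Φ a ∈ S)
    (hmul : ∀ a ∈ S₀, ∀ x, Φ (x * a) = Φ x * Φ a ∧ Φ (a * x) = Φ a * Φ x) :
    IsHypertrace (ψ ∘ₗ Φ) S₀ := by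
  refine ⟨hψ.1.comp_ucp hΦ, fun X a ha => ?_⟩
  simp only [LinearMap.comp_apply, (hmul a ha X).1, (hmul a ha X).2]
  exact hψ.2 _ _ (hmaps a ha)

theorem hypertrace_transfer_along_ucp_general
    {A : Type*} [NormedRing A] [StarRing A] [NormedAlgebra ℂ A]
    {H₀ : Type*} [NormedAddCommGroup H₀] [InnerProductSpace ℂ H₀] [CompleteSpace H₀]
    {H : Type*} [NormedAddCommGroup H] [InnerProductSpace ℂ H] [CompleteSpace H]
    (π₀ : A →⋆ₐ[ℂ] (H₀ →L[ℂ] H₀))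
    (π : A →⋆ₐ[ℂ] (H →L[ℂ] H))
    (ψ : (H →L[ℂ] H) →ₗ[ℂ] ℂ) (hψ : IsHypertrace ψ (Set.range ⇑π))
    (Φ : (H₀ →L[ℂ] H₀) →ₗ[ℂ] (H →L[ℂ] H)) (hΦ : IsUCP Φ)
    (hext : ∀ a : A, Φ (π₀ a) = π a) :
    IsHypertrace (ψ ∘ₗ Φ) (Set.range ⇑π₀) ∧
    ∃ ψ₀ : (H₀ →L[ℂ] H₀) →ₗ[ℂ] ℂ, IsHypertrace ψ₀ (Set.range ⇑π₀) := by
  have hmul : ∀ a ∈ Set.range ⇑π₀, ∀ x, Φ (x * a) = Φ x * Φ a ∧ Φ (a * x) = Φ a * Φ x := by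
    rintro _ ⟨b, rfl⟩ x
    refine ⟨hΦ.map_mul_of_map_star_mul_self ?_ x, hΦ.map_mul_of_map_mul_star_self ?_ x⟩ <;>
      rw [← map_star π₀ b, ← map_mul, hext, hext, map_mul, map_star]
  have htrace : IsHypertrace (ψ ∘ₗ Φ) (Set.range ⇑π₀) :=
    hψ.comp_ucp hΦ (by rintro _ ⟨b, rfl⟩; exact ⟨b, (hext b).symm⟩) hmul
  exact ⟨htrace, _, htrace⟩

/-- transfer of amenable traces between representations. Let `π₀` be a
faithful unital representation and `π` a non-zero unital representation of the unital
separable C*-algebra `A` such that `π(A)` has an amenable trace, witnessed by a hypertrace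
`ψ` on `L(H)`. If `Φ : L(H₀) → L(H)` is any u.c.p. map extending `π ∘ π₀⁻¹` (i.e.
`Φ(π₀ a) = π a`), then `ψ ∘ Φ` is a hypertrace on `L(H₀)` for `π₀(A)`; in particular
`π₀(A)` has an amenable trace. -/
theorem hypertrace_transfer_along_ucp
    {A : Type*} [NormedRing A] [StarRing A] [CStarRing A] [NormedAlgebra ℂ A]
    [CompleteSpace A] [StarModule ℂ A] [TopologicalSpace.SeparableSpace A]
    {H₀ : Type*} [NormedAddCommGroup H₀] [InnerProductSpace ℂ H₀] [CompleteSpace H₀]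
    {H : Type*} [NormedAddCommGroup H] [InnerProductSpace ℂ H] [CompleteSpace H]
    (π₀ : A →⋆ₐ[ℂ] (H₀ →L[ℂ] H₀)) (hπ₀ : Function.Injective π₀)
    (π : A →⋆ₐ[ℂ] (H →L[ℂ] H)) (hπnz : ∃ a : A, π a ≠ 0)
    (ψ : (H →L[ℂ] H) →ₗ[ℂ] ℂ) (hψ : IsHypertrace ψ (Set.range ⇑π))
    (Φ : (H₀ →L[ℂ] H₀) →ₗ[ℂ] (H →L[ℂ] H)) (hΦ : IsUCP Φ)
    (hext : ∀ a : A, Φ (π₀ a) = π a) :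
    IsHypertrace (ψ ∘ₗ Φ) (Set.range ⇑π₀) ∧
    ∃ ψ₀ : (H₀ →L[ℂ] H₀) →ₗ[ℂ] ℂ, IsHypertrace ψ₀ (Set.range ⇑π₀) :=
  hypertrace_transfer_along_ucp_general π₀ π ψ hψ Φ hΦ hext
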